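/- Fix v_k ∈ ℝ^d, z ∈ ℝ and 0 ≤ s ≤ T_k, and set A_I := φ_{T−T_k}(v_k) − φ_{T−T_k}(u_k) and B_I := ψ_{T−T_k}(v_k) − ψ_{T−T_k}(u_k). Assume X has the affine property at z ψ_{T−T_k}(v_k) + (1−z) ψ_{T−T_k}(u_k) and that (φ, ψ) satisfy the semiflow equations at u_k. Then, Q'-almost surely, E_{Q'}[exp(z(A_I + B_I·X_{T_k})) | ℱ_s] = exp( z φ_{T−T_k}(v_k) + (1−z) φ_{T−T_k}(u_k) + φ_{T_k−s}(z ψ_{T−T_k}(v_k) + (1−z) ψ_{T−T_k}(u_k)) + ψ_{T_k−s}(z ψ_{T−T_k}(v_k) + (1−z) ψ_{T−T_k}(u_k))·X_s ) / exp( φ_{T−s}(u_k) + ψ_{T−s}(u_k)·X_s ). -/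

import Mathlib

open MeasureTheory Real Matrix

/-- `X` has the affine property at `u` with exponent functions `φ, ψ`, with respect to the
filtration `ℱ`, the measure `Q` and the horizon `T`. -/
def AffineProperty {Ω : Type*} {m0 : MeasurableSpace Ω} {d : ℕ} (T : ℝ)
    (ℱ : MeasureTheory.Filtration ℝ m0) (Q : Measure Ω) (X : ℝ → Ω → (Fin d → ℝ))
    (φ : ℝ → (Fin d → ℝ) → ℝ) (ψ : ℝ → (Fin d → ℝ) → (Fin d → ℝ))
    (u : Fin d → ℝ) : Prop :=
  ∀ s t : ℝ, 0 ≤ s → s ≤ t → t ≤ T →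
    Integrable (fun ω => exp (u ⬝ᵥ X t ω)) Q ∧
    Q[fun ω => exp (u ⬝ᵥ X t ω)|ℱ s] =ᵐ[Q]
      fun ω => exp (φ (t - s) u + ψ (t - s) u ⬝ᵥ X s ω)

/-- `(φ, ψ)` satisfy the semiflow equations at the vector `v`, up to horizon `T`. -/
def Semiflow {d : ℕ} (T : ℝ) (φ : ℝ → (Fin d → ℝ) → ℝ)
    (ψ : ℝ → (Fin d → ℝ) → (Fin d → ℝ)) (v : Fin d → ℝ) : Prop :=
  (∀ s t : ℝ, 0 ≤ s → 0 ≤ t → t + s ≤ T →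
      φ (t + s) v = φ t v + φ s (ψ t v) ∧ ψ (t + s) v = ψ s (ψ t v)) ∧
    φ 0 v = 0 ∧ ψ 0 v = v

/-- The forward measure `Q'` defined by the density
`dQ'/dQ = exp (φ (T - Tk) uk + ψ (T - Tk) uk ⬝ᵥ X Tk) / exp (φ T uk + ψ T uk ⬝ᵥ x)`. -/
noncomputable def forwardMeasure {Ω : Type*} {m0 : MeasurableSpace Ω} {d : ℕ} (T : ℝ)
    (Q : Measure Ω) (X : ℝ → Ω → (Fin d → ℝ)) (x : Fin d → ℝ)
    (φ : ℝ → (Fin d → ℝ) → ℝ) (ψ : ℝ → (Fin d → ℝ) → (Fin d → ℝ))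
    (Tk : ℝ) (uk : Fin d → ℝ) : Measure Ω :=
  Q.withDensity (fun ω => ENNReal.ofReal
    (exp (φ (T - Tk) uk + ψ (T - Tk) uk ⬝ᵥ X Tk ω) / exp (φ T uk + ψ T uk ⬝ᵥ x)))

/-!
Under `Q'` the density is `D = exp (φ_{T-Tk}(uk) + ψ_{T-Tk}(uk)·X_{Tk} - c)` with `c` a constant, so
by Bayes' formula `E_{Q'}[f | ℱ_s] = E_Q[f D | ℱ_s] / E_Q[D | ℱ_s]`. The product `f D` is again
exponential-affine in `X_{Tk}`, with slope `w = z ψ_{T-Tk}(vk) + (1-z) ψ_{T-Tk}(uk)`, so the affine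
property at `w` computes the numerator. The affine property at `ψ_{T-Tk}(uk)` computes the
denominator, and the semiflow equations at `uk` collapse it to
`exp (φ_{T-s}(uk) + ψ_{T-s}(uk)·X_s - c)`.

The only analytic subtlety in Bayes' formula is that the candidate `g` is integrable under `Q'`.
Since `g` is `ℱ_s`-measurable, `∫ |g| D dQ = ∫ |g| E_Q[D | ℱ_s] dQ`, and the right-hand side is
finite because `g E_Q[D | ℱ_s] = E_Q[f D | ℱ_s]`.
-/

open scoped ENNReal

namespace MeasureTheory

variable {Ω : Type*} {m m0 : MeasurableSpace Ω} {μ : Measure Ω}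

theorem lintegral_mul_condLExp (hm : m ≤ m0) [SigmaFinite (μ.trim hm)] {h F : Ω → ℝ≥0∞}
    (hh : Measurable[m] h) (hF : AEMeasurable F μ) :
    ∫⁻ ω, h ω * μ⁻[F|m] ω ∂μ = ∫⁻ ω, h ω * F ω ∂μ := by
  have htrim : (μ.withDensity μ⁻[F|m]).trim hm = (μ.withDensity F).trim hm := by
    refine @Measure.ext Ω m _ _ fun s hs => ?_
    rw [trim_measurableSet_eq hm hs, trim_measurableSet_eq hm hs,
      withDensity_apply _ (hm s hs), withDensity_apply _ (hm s hs), setLIntegral_condLExp hm _ _ hs]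
  have hh0 : AEMeasurable h μ := (hh.mono hm le_rfl).aemeasurable
  calc ∫⁻ ω, h ω * μ⁻[F|m] ω ∂μ
      = ∫⁻ ω, h ω ∂(μ.withDensity μ⁻[F|m]).trim hm := by
        rw [lintegral_trim hm hh, lintegral_withDensity_eq_lintegral_mul₀ (by fun_prop) hh0]
        simp only [Pi.mul_apply, mul_comm]
    _ = ∫⁻ ω, h ω * F ω ∂μ := by
        rw [htrim, lintegral_trim hm hh, lintegral_withDensity_eq_lintegral_mul₀ hF hh0]
        simp only [Pi.mul_apply, mul_comm]

theorem Integrable.mul_of_mul_condExp (hm : m ≤ m0) [SigmaFinite (μ.trim hm)] {g D : Ω → ℝ}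
    (hg : StronglyMeasurable[m] g) (hD : Integrable D μ) (hD0 : 0 ≤ᵐ[μ] D)
    (hgD : Integrable (g * μ[D|m]) μ) : Integrable (g * D) μ := by
  refine ⟨(hg.mono hm).aestronglyMeasurable.mul hD.aestronglyMeasurable, ?_⟩
  have hgm : Measurable[m] fun ω => ‖g ω‖ₑ := by fun_prop
  calc ∫⁻ ω, ‖(g * D) ω‖ₑ ∂μ
      = ∫⁻ ω, ‖g ω‖ₑ * ENNReal.ofReal (D ω) ∂μ := by
        refine lintegral_congr_ae ?_
        filter_upwards [hD0] with ω hω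
        simp [enorm_mul, Real.enorm_eq_ofReal hω]
    _ = ∫⁻ ω, ‖g ω‖ₑ * ENNReal.ofReal (μ[D|m] ω) ∂μ := by
        rw [← lintegral_mul_condLExp hm hgm (by fun_prop)]
        refine lintegral_congr_ae ?_
        filter_upwards [condLExp_ofReal m hD hD0] with ω hω
        rw [hω]
    _ = ∫⁻ ω, ‖(g * μ[D|m]) ω‖ₑ ∂μ := by
        refine lintegral_congr_ae ?_
        filter_upwards [condExp_nonneg (m := m) hD0] with ω hω
        simp [enorm_mul, Real.enorm_eq_ofReal hω]
    _ < ∞ := hgD.hasFiniteIntegral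

theorem integrable_withDensity_ofReal_iff {D f : Ω → ℝ} (hD : Measurable D) (hD0 : 0 ≤ D) :
    Integrable f (μ.withDensity fun ω => ENNReal.ofReal (D ω)) ↔ Integrable (f * D) μ := by
  refine (integrable_withDensity_iff_integrable_smul hD.real_toNNReal).trans
    (integrable_congr (Filter.Eventually.of_forall fun ω => ?_))
  simp [NNReal.smul_def, Real.coe_toNNReal _ (hD0 ω), mul_comm]

theorem setIntegral_withDensity_ofReal {D : Ω → ℝ} (hD : Measurable D) (hD0 : 0 ≤ D)
    (f : Ω → ℝ) {s : Set Ω} (hs : MeasurableSet s) :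
    ∫ ω in s, f ω ∂μ.withDensity (fun ω => ENNReal.ofReal (D ω)) = ∫ ω in s, (f * D) ω ∂μ := by
  refine (setIntegral_withDensity_eq_setIntegral_smul hD.real_toNNReal f hs).trans
    (setIntegral_congr_fun hs fun ω _ => ?_)
  simp [NNReal.smul_def, Real.coe_toNNReal _ (hD0 ω), mul_comm]

/-- Bayes' formula `μ'[f|m] = μ[f D|m] / μ[D|m]` for `dμ' = D dμ`, multiplied out. -/
theorem condExp_withDensity_ae_eq (hm : m ≤ m0) [SigmaFinite (μ.trim hm)] {D f g : Ω → ℝ}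
    (hDm : Measurable D) (hD0 : 0 ≤ D) (hD : Integrable D μ) (hfD : Integrable (f * D) μ)
    (hg : StronglyMeasurable[m] g) (hbayes : μ[f * D|m] =ᵐ[μ] g * μ[D|m]) :
    (μ.withDensity fun ω => ENNReal.ofReal (D ω))[f|m]
      =ᵐ[μ.withDensity fun ω => ENNReal.ofReal (D ω)] g := by
  have : IsFiniteMeasure (μ.withDensity fun ω => ENNReal.ofReal (D ω)) :=
    isFiniteMeasure_withDensity_ofReal hD.hasFiniteIntegral
  have hgD : Integrable (g * D) μ := Integrable.mul_of_mul_condExp hm hg hD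
    (Filter.Eventually.of_forall hD0) (integrable_condExp.congr hbayes)
  refine (ae_eq_condExp_of_forall_setIntegral_eq hm
    ((integrable_withDensity_ofReal_iff hDm hD0).2 hfD)
    (fun s _ _ => ((integrable_withDensity_ofReal_iff hDm hD0).2 hgD).integrableOn)
    (fun s hs _ => ?_) hg.aestronglyMeasurable).symm
  rw [setIntegral_withDensity_ofReal hDm hD0 _ (hm s hs),
    setIntegral_withDensity_ofReal hDm hD0 _ (hm s hs), ← setIntegral_condExp hm hgD hs,
    ← setIntegral_condExp hm hfD hs]
  exact setIntegral_congr_ae (hm s hs) (((condExp_mul_of_stronglyMeasurable_left hg hgD hD).trans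
    hbayes.symm).mono fun ω hω _ => hω)

end MeasureTheory

section AffineProperty

variable {Ω : Type*} {m0 : MeasurableSpace Ω} {d : ℕ} {T : ℝ} {ℱ : Filtration ℝ m0}
  {Q : Measure Ω} {X : ℝ → Ω → (Fin d → ℝ)} {φ : ℝ → (Fin d → ℝ) → ℝ}
  {ψ : ℝ → (Fin d → ℝ) → (Fin d → ℝ)} {u : Fin d → ℝ}

theorem AffineProperty.integrable_exp_add (h : AffineProperty T ℱ Q X φ ψ u) (a : ℝ) {t : ℝ}
    (ht : 0 ≤ t) (htT : t ≤ T) : Integrable (fun ω => exp (a + u ⬝ᵥ X t ω)) Q := by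
  simp_rw [exp_add]
  exact (h t t ht le_rfl htT).1.const_mul _

theorem AffineProperty.condExp_exp_add (h : AffineProperty T ℱ Q X φ ψ u) (a : ℝ) {s t : ℝ}
    (hs : 0 ≤ s) (hst : s ≤ t) (htT : t ≤ T) :
    Q[fun ω => exp (a + u ⬝ᵥ X t ω)|ℱ s]
      =ᵐ[Q] fun ω => exp (a + φ (t - s) u + ψ (t - s) u ⬝ᵥ X s ω) := by
  have hsmul := condExp_smul (μ := Q) (exp a) (fun ω => exp (u ⬝ᵥ X t ω)) (ℱ s)
  simp only [Pi.smul_def, smul_eq_mul, ← exp_add] at hsmul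
  filter_upwards [hsmul, (h s t hs hst htT).2] with ω hsmul hce
  rw [hsmul, hce, ← exp_add, add_assoc]

end AffineProperty

theorem forward_cpi_mgf_general
    {Ω : Type*} {m0 : MeasurableSpace Ω} {d : ℕ} (T : ℝ)
    (ℱ : MeasureTheory.Filtration ℝ m0) (Q : Measure Ω) [IsProbabilityMeasure Q]
    (X : ℝ → Ω → (Fin d → ℝ)) (x : Fin d → ℝ)
    (hadapted : ∀ t : ℝ, 0 ≤ t → t ≤ T → Measurable[ℱ t] (X t))
    (φ : ℝ → (Fin d → ℝ) → ℝ) (ψ : ℝ → (Fin d → ℝ) → (Fin d → ℝ))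
    (Tk : ℝ) (hTkT : Tk ≤ T) (uk : Fin d → ℝ)
    (haffine_psi : AffineProperty T ℱ Q X φ ψ (ψ (T - Tk) uk))
    (vk : Fin d → ℝ) (z : ℝ) (s : ℝ) (hs : 0 ≤ s) (hsTk : s ≤ Tk)
    (AI : ℝ) (BI : Fin d → ℝ)
    (hAI : AI = φ (T - Tk) vk - φ (T - Tk) uk)
    (hBI : BI = ψ (T - Tk) vk - ψ (T - Tk) uk)
    (haffine_z : AffineProperty T ℱ Q X φ ψ (z • ψ (T - Tk) vk + (1 - z) • ψ (T - Tk) uk))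
    (hsemiflow : Semiflow T φ ψ uk) :
    (forwardMeasure T Q X x φ ψ Tk uk)[fun ω => exp (z * (AI + BI ⬝ᵥ X Tk ω))|ℱ s]
      =ᵐ[forwardMeasure T Q X x φ ψ Tk uk]
    fun ω => exp (z * φ (T - Tk) vk + (1 - z) * φ (T - Tk) uk
        + φ (Tk - s) (z • ψ (T - Tk) vk + (1 - z) • ψ (T - Tk) uk)
        + ψ (Tk - s) (z • ψ (T - Tk) vk + (1 - z) • ψ (T - Tk) uk) ⬝ᵥ X s ω)
      / exp (φ (T - s) uk + ψ (T - s) uk ⬝ᵥ X s ω) := by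
  subst hAI hBI
  obtain ⟨hsemiflow, -, -⟩ := hsemiflow
  obtain ⟨hφ, hψ⟩ := hsemiflow (Tk - s) (T - Tk) (by linarith) (by linarith) (by linarith)
  rw [show T - Tk + (Tk - s) = T - s by ring] at hφ hψ
  have hTk0 : 0 ≤ Tk := hs.trans hsTk
  set w := z • ψ (T - Tk) vk + (1 - z) • ψ (T - Tk) uk
  set c := φ T uk + ψ T uk ⬝ᵥ x
  have hdensity : (fun ω => exp (φ (T - Tk) uk + ψ (T - Tk) uk ⬝ᵥ X Tk ω) / exp c)
      = fun ω => exp (φ (T - Tk) uk - c + ψ (T - Tk) uk ⬝ᵥ X Tk ω) := by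
    funext ω
    rw [← exp_sub]
    ring_nf
  have hweighted : (fun ω => exp (z * (φ (T - Tk) vk - φ (T - Tk) uk
        + (ψ (T - Tk) vk - ψ (T - Tk) uk) ⬝ᵥ X Tk ω)))
        * (fun ω => exp (φ (T - Tk) uk + ψ (T - Tk) uk ⬝ᵥ X Tk ω) / exp c)
      = fun ω => exp (z * φ (T - Tk) vk + (1 - z) * φ (T - Tk) uk - c + w ⬝ᵥ X Tk ω) := by
    funext ω
    rw [hdensity, Pi.mul_apply, ← exp_add]
    simp only [w, add_dotProduct, sub_dotProduct, smul_dotProduct, smul_eq_mul]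
    ring_nf
  have hXTk := (hadapted Tk hTk0 hTkT).mono (ℱ.le Tk) le_rfl
  have hXs := hadapted s hs (hsTk.trans hTkT)
  refine condExp_withDensity_ae_eq (ℱ.le s) (by fun_prop) (fun ω => by positivity)
    (hdensity ▸ haffine_psi.integrable_exp_add _ hTk0 hTkT)
    (hweighted ▸ haffine_z.integrable_exp_add _ hTk0 hTkT) (by fun_prop) ?_
  rw [hweighted, hdensity]
  filter_upwards [haffine_z.condExp_exp_add _ hs hsTk hTkT,
    haffine_psi.condExp_exp_add _ hs hsTk hTkT] with ω hnum hden
  rw [Pi.mul_apply, hnum, hden, div_mul_eq_mul_div, eq_div_iff (exp_pos _).ne', ← exp_add,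
    ← exp_add, hφ, hψ]
  ring_nf

/-- The conditional moment generating function of the log forward CPI under the forward
measure `Q'`: with `A_I := φ (T-Tk) vk - φ (T-Tk) uk` and `B_I := ψ (T-Tk) vk - ψ (T-Tk) uk`,
if `X` has the affine property at `z • ψ (T-Tk) vk + (1-z) • ψ (T-Tk) uk` and `(φ, ψ)` satisfy
the semiflow equations at `uk`, then `Q'`-a.s.
`E_{Q'}[exp (z * (A_I + B_I ⬝ᵥ X Tk)) | ℱ s]
  = exp (z * φ (T-Tk) vk + (1-z) * φ (T-Tk) uk
      + φ (Tk-s) (z • ψ (T-Tk) vk + (1-z) • ψ (T-Tk) uk)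
      + ψ (Tk-s) (z • ψ (T-Tk) vk + (1-z) • ψ (T-Tk) uk) ⬝ᵥ X s)
    / exp (φ (T-s) uk + ψ (T-s) uk ⬝ᵥ X s)`. -/
theorem forward_cpi_mgf
    {Ω : Type*} {m0 : MeasurableSpace Ω} {d : ℕ} (T : ℝ) (hT : 0 < T)
    (ℱ : MeasureTheory.Filtration ℝ m0) (Q : Measure Ω) [IsProbabilityMeasure Q]
    (X : ℝ → Ω → (Fin d → ℝ)) (x : Fin d → ℝ)
    (hadapted : ∀ t : ℝ, 0 ≤ t → t ≤ T → Measurable[ℱ t] (X t))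
    (hX0 : ∀ ω, X 0 ω = x)
    (φ : ℝ → (Fin d → ℝ) → ℝ) (ψ : ℝ → (Fin d → ℝ) → (Fin d → ℝ))
    (Tk : ℝ) (hTk0 : 0 ≤ Tk) (hTkT : Tk ≤ T) (uk : Fin d → ℝ)
    (haffine_uk : AffineProperty T ℱ Q X φ ψ uk)
    (haffine_psi : AffineProperty T ℱ Q X φ ψ (ψ (T - Tk) uk))
    (vk : Fin d → ℝ) (z : ℝ) (s : ℝ) (hs : 0 ≤ s) (hsTk : s ≤ Tk)
    (AI : ℝ) (BI : Fin d → ℝ)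
    (hAI : AI = φ (T - Tk) vk - φ (T - Tk) uk)
    (hBI : BI = ψ (T - Tk) vk - ψ (T - Tk) uk)
    (haffine_z : AffineProperty T ℱ Q X φ ψ (z • ψ (T - Tk) vk + (1 - z) • ψ (T - Tk) uk))
    (hsemiflow : Semiflow T φ ψ uk) :
    (forwardMeasure T Q X x φ ψ Tk uk)[fun ω => exp (z * (AI + BI ⬝ᵥ X Tk ω))|ℱ s]
      =ᵐ[forwardMeasure T Q X x φ ψ Tk uk]
    fun ω => exp (z * φ (T - Tk) vk + (1 - z) * φ (T - Tk) uk
        + φ (Tk - s) (z • ψ (T - Tk) vk + (1 - z) • ψ (T - Tk) uk)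
        + ψ (Tk - s) (z • ψ (T - Tk) vk + (1 - z) • ψ (T - Tk) uk) ⬝ᵥ X s ω)
      / exp (φ (T - s) uk + ψ (T - s) uk ⬝ᵥ X s ω) :=
  forward_cpi_mgf_general T ℱ Q X x hadapted φ ψ Tk hTkT uk haffine_psi vk z s hs hsTk AI BI hAI hBI
    haffine_z hsemiflow
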